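/- Let m₁, m₂, m₃ ≥ 2 be integers, and let Γ = ⟨σ₁, σ₂, σ₃ | σ₁^{m₁} = σ₂^{m₂} = σ₃^{m₃} = σ₁σ₂σ₃ = 1⟩ be the corresponding triangle (von Dyck–type) group. Then Γ admits a finite quotient group G in which the images of σ₁, σ₂, σ₃ have orders exactly m₁, m₂, m₃ respectively. -/

import Mathlib

/-!
The quotient is realised inside `PGL(2, 𝔽_p)` for a prime `p ≡ 1 [MOD 2 m₁ m₂ m₃]`.
A matrix conjugate to `diag(x, y)` has image of order `orderOf (x / y)` in `PGL₂`, because its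
`k`-th power is scalar exactly when `x ^ k = y ^ k`. Pick units `a, b, c` of `𝔽_p` whose squares
have orders `m₁, m₂, m₃`. The companion matrix `A` of `X² - (a + a⁻¹) X + 1` and a suitable
determinant-one matrix `B` with eigenvalues `b, b⁻¹` have a triangular product `A * B` with
diagonal `c, c⁻¹`, so `σ₁ ↦ A`, `σ₂ ↦ B`, `σ₃ ↦ (A * B)⁻¹` maps the triangle group onto a finite
group in which the generators have the required orders. Since `mᵢ ≥ 2`, none of `a, b, c` equals
its inverse, so all three matrices are diagonalisable.
-/

open Matrix MatrixGroups

theorem IsCyclic.exists_orderOf_eq_of_dvd {G : Type*} [Group G] [Finite G] [IsCyclic G] {d : ℕ}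
    (hd : d ∣ Nat.card G) : ∃ x : G, orderOf x = d := by
  obtain ⟨g, hg⟩ := IsCyclic.exists_ofOrder_eq_natCard (α := G)
  refine ⟨g ^ (Nat.card G / d), ?_⟩
  rw [orderOf_pow, hg, Nat.gcd_eq_right (Nat.div_dvd_of_dvd hd),
    Nat.div_div_self hd Nat.card_pos.ne']

theorem ZMod.exists_unit_orderOf_sq_eq (p : ℕ) [Fact p.Prime] {m : ℕ} (hm : 2 * m ∣ p - 1) :
    ∃ u : (ZMod p)ˣ, orderOf (u ^ 2) = m := by
  obtain ⟨u, hu⟩ := IsCyclic.exists_orderOf_eq_of_dvd (G := (ZMod p)ˣ) (d := 2 * m)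
    (by rwa [Nat.card_eq_fintype_card, ZMod.card_units])
  refine ⟨u, ?_⟩
  rw [orderOf_pow_of_dvd two_ne_zero (hu ▸ dvd_mul_right 2 m), hu]
  omega

theorem Units.val_ne_inv_of_sq_ne_one {F : Type*} [Field F] {u : Fˣ} (hu : u ^ 2 ≠ 1) :
    (u : F) ≠ (u : F)⁻¹ := by
  intro h
  apply hu
  ext
  push_cast
  field_simp at h
  linear_combination h

namespace Matrix.GeneralLinearGroup

variable {n R : Type*} [Fintype n] [DecidableEq n] [CommRing R]

def diagonal : (n → Rˣ) →* GL n R :=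
  (Units.map (diagonalRingHom n R).toMonoidHom).comp MulEquiv.piUnits.symm.toMonoidHom

theorem coe_diagonal (d : n → Rˣ) :
    (diagonal d : Matrix n n R) = Matrix.diagonal fun i ↦ (d i : R) :=
  rfl

end Matrix.GeneralLinearGroup

namespace Matrix.ProjGenLinGroup

section CommRing

variable {n R : Type*} [Fintype n] [DecidableEq n] [CommRing R]

instance [Finite R] : Finite PGL(n, R) := Finite.of_surjective _ mk_surjective

theorem mk_diagonal_eq_one_iff (d : n → Rˣ) :
    mk (GeneralLinearGroup.diagonal d) = 1 ↔ ∃ u : Rˣ, ∀ i, d i = u := by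
  simp only [mk_eq_one, GeneralLinearGroup.center_eq_range_scalar, MonoidHom.mem_range,
    Units.ext_iff, GeneralLinearGroup.coe_scalar, GeneralLinearGroup.coe_diagonal, scalar_apply,
    diagonal_injective.eq_iff, funext_iff]
  simp only [Units.val_inj]
  exact exists_congr fun u ↦ forall_congr' fun i ↦ eq_comm

theorem orderOf_mk_diagonal_fin_two (x y : Rˣ) :
    orderOf (mk (GeneralLinearGroup.diagonal ![x, y])) = orderOf (x / y) := by
  rw [orderOf_eq_orderOf_iff]
  intro k
  rw [← map_pow, ← map_pow, mk_diagonal_eq_one_iff, div_pow, div_eq_one]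
  simp [Fin.forall_fin_two, eq_comm]

theorem orderOf_mk_eq_of_mul_eq_mul_diagonal {g P : GL (Fin 2) R} {x y : Rˣ}
    (h : (g : Matrix (Fin 2) (Fin 2) R) * P = P * !![(x : R), 0; 0, y]) :
    orderOf (mk g) = orderOf (x / y) := by
  have hconj : SemiconjBy P (GeneralLinearGroup.diagonal ![x, y]) g := by
    ext : 1
    simp [h, GeneralLinearGroup.coe_diagonal, diagonal_fin_two]
  rw [← orderOf_mk_diagonal_fin_two, (hconj.map mk).orderOf_eq]

end CommRing

theorem exists_orderOf_mk_eq_orderOf_sq {F : Type*} [Field F] {a b c : Fˣ} (ha : a ^ 2 ≠ 1)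
    (hb : b ^ 2 ≠ 1) (hc : c ^ 2 ≠ 1) :
    ∃ A B : GL (Fin 2) F, orderOf (mk A) = orderOf (a ^ 2) ∧
      orderOf (mk B) = orderOf (b ^ 2) ∧ orderOf (mk (A * B)) = orderOf (c ^ 2) := by
  have ha' := Units.val_ne_inv_of_sq_ne_one ha
  have hb' := Units.val_ne_inv_of_sq_ne_one hb
  have hc' := Units.val_ne_inv_of_sq_ne_one hc
  set s : F := a + (a : F)⁻¹
  set t : F := b + (b : F)⁻¹
  let A := GeneralLinearGroup.mkOfDetNeZero !![s, -1; 1, 0] (by simp [det_fin_two_of])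
  let B := GeneralLinearGroup.mkOfDetNeZero !![0, (c : F)⁻¹; -c, t] (by simp [det_fin_two_of])
  -- `A * B = !![c, s * c⁻¹ - t; 0, c⁻¹]`; the columns of each `P` below are eigenvectors.
  refine ⟨A, B, ?_, ?_, ?_⟩ <;> simp only [sq, ← div_inv_eq_mul]
  · refine orderOf_mk_eq_of_mul_eq_mul_diagonal (P := GeneralLinearGroup.mkOfDetNeZero
      !![(a : F), (a : F)⁻¹; 1, 1] (by simp [det_fin_two_of, sub_eq_zero, ha'])) ?_
    ext i j
    fin_cases i <;> fin_cases j <;> simp [A, s, mul_apply] <;> field_simp <;> ring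
  · refine orderOf_mk_eq_of_mul_eq_mul_diagonal (P := GeneralLinearGroup.mkOfDetNeZero
      !![(c : F)⁻¹, (c : F)⁻¹; b, (b : F)⁻¹]
      (by simp [det_fin_two_of, ← mul_sub, sub_eq_zero, hb'.symm])) ?_
    ext i j
    fin_cases i <;> fin_cases j <;> simp [B, t, mul_apply] <;> field_simp <;> ring
  · refine orderOf_mk_eq_of_mul_eq_mul_diagonal (P := GeneralLinearGroup.mkOfDetNeZero
      !![(c : F)⁻¹ - c, s * (c : F)⁻¹ - t; 0, (c : F)⁻¹ - c]
      (by simp [det_fin_two_of, sub_eq_zero, hc'.symm])) ?_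
    ext i j
    fin_cases i <;> fin_cases j <;> simp [A, B, s, t, mul_apply, mul_comm]
    field_simp
    ring

theorem exists_zmod_orderOf_eq {m₁ m₂ m₃ : ℕ} (h1 : 2 ≤ m₁) (h2 : 2 ≤ m₂) (h3 : 2 ≤ m₃) :
    ∃ (p : ℕ) (_ : Fact p.Prime) (A B : PGL(2, ZMod p)),
      orderOf A = m₁ ∧ orderOf B = m₂ ∧ orderOf (A * B) = m₃ := by
  obtain ⟨p, hp, -, hp1⟩ :=
    Nat.exists_prime_gt_modEq_one 0 (k := 2 * (m₁ * m₂ * m₃)) (by positivity)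
  have : Fact p.Prime := ⟨hp⟩
  have hdvd := (Nat.modEq_iff_dvd' hp.one_le).mp hp1.symm
  obtain ⟨a, ha⟩ := ZMod.exists_unit_orderOf_sq_eq p (m := m₁) (dvd_trans ⟨m₂ * m₃, by ring⟩ hdvd)
  obtain ⟨b, hb⟩ := ZMod.exists_unit_orderOf_sq_eq p (m := m₂) (dvd_trans ⟨m₁ * m₃, by ring⟩ hdvd)
  obtain ⟨c, hc⟩ := ZMod.exists_unit_orderOf_sq_eq p (m := m₃) (dvd_trans ⟨m₁ * m₂, by ring⟩ hdvd)
  have sq_ne_one {u : (ZMod p)ˣ} {m : ℕ} (hu : orderOf (u ^ 2) = m) (hm : 2 ≤ m) : u ^ 2 ≠ 1 := by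
    intro h
    rw [h, orderOf_one] at hu
    omega
  obtain ⟨A, B, hA, hB, hAB⟩ :=
    exists_orderOf_mk_eq_orderOf_sq (sq_ne_one ha h1) (sq_ne_one hb h2) (sq_ne_one hc h3)
  exact ⟨p, this, mk A, mk B, hA.trans ha, hB.trans hb, map_mul mk A B ▸ hAB.trans hc⟩

end Matrix.ProjGenLinGroup

def triangleRels (m₁ m₂ m₃ : ℕ) : Set (FreeGroup (Fin 3)) :=
  {.of 0 ^ m₁, .of 1 ^ m₂, .of 2 ^ m₃, .of 0 * .of 1 * .of 2}

theorem exists_triangleGroup_hom {G : Type*} [Group G] {m₁ m₂ m₃ : ℕ} {x y z : G}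
    (hx : x ^ m₁ = 1) (hy : y ^ m₂ = 1) (hz : z ^ m₃ = 1) (hxyz : x * y * z = 1) :
    ∃ φ : PresentedGroup (triangleRels m₁ m₂ m₃) →* G,
      φ (.of 0) = x ∧ φ (.of 1) = y ∧ φ (.of 2) = z := by
  have hrels : ∀ r ∈ triangleRels m₁ m₂ m₃, FreeGroup.lift ![x, y, z] r = 1 := by
    rintro r (rfl | rfl | rfl | rfl) <;> simp [hx, hy, hz, hxyz]
  exact ⟨PresentedGroup.toGroup hrels, PresentedGroup.toGroup.of hrels,
    PresentedGroup.toGroup.of hrels, PresentedGroup.toGroup.of hrels⟩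

theorem MonoidHom.orderOf_rangeRestrict {G H : Type*} [Group G] [Group H] (φ : G →* H) (g : G) :
    orderOf (φ.rangeRestrict g) = orderOf (φ g) := by
  rw [← Subgroup.orderOf_coe, φ.coe_rangeRestrict]

/-- The triangle group `⟨σ₁,σ₂,σ₃ ∣ σᵢ^{mᵢ} = σ₁σ₂σ₃ = 1⟩` has a finite quotient
in which the images of the generators have orders exactly `m₁, m₂, m₃`. -/
theorem stmt_5 (m₁ m₂ m₃ : ℕ) (h1 : 2 ≤ m₁) (h2 : 2 ≤ m₂) (h3 : 2 ≤ m₃)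
    (rels : Set (FreeGroup (Fin 3)))
    (hrels : rels = {FreeGroup.of 0 ^ m₁, FreeGroup.of 1 ^ m₂, FreeGroup.of 2 ^ m₃,
      FreeGroup.of 0 * FreeGroup.of 1 * FreeGroup.of 2}) :
    ∃ (G : Type) (_ : Group G) (_ : Finite G) (φ : PresentedGroup rels →* G),
      Function.Surjective φ ∧
      orderOf (φ (PresentedGroup.of 0)) = m₁ ∧
      orderOf (φ (PresentedGroup.of 1)) = m₂ ∧
      orderOf (φ (PresentedGroup.of 2)) = m₃ := by
  obtain rfl : rels = triangleRels m₁ m₂ m₃ := hrels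
  obtain ⟨p, _, A, B, hA, hB, hAB⟩ := ProjGenLinGroup.exists_zmod_orderOf_eq h1 h2 h3
  have hC : orderOf (A * B)⁻¹ = m₃ := (orderOf_inv _).trans hAB
  obtain ⟨φ, hφ₀, hφ₁, hφ₂⟩ := exists_triangleGroup_hom (hA ▸ pow_orderOf_eq_one A)
    (hB ▸ pow_orderOf_eq_one B) (hC ▸ pow_orderOf_eq_one _) (mul_inv_cancel (A * B))
  refine ⟨φ.range, _, inferInstance, φ.rangeRestrict, φ.rangeRestrict_surjective, ?_, ?_, ?_⟩
  · rw [φ.orderOf_rangeRestrict, hφ₀, hA]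
  · rw [φ.orderOf_rangeRestrict, hφ₁, hB]
  · rw [φ.orderOf_rangeRestrict, hφ₂, hC]
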